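/- Suppose Λ ∈ Q satisfies χ(Λ) = 1_A. Then: (1) Λ·Λ = Λ; (2) χ(r·Λ) ∈ B and Λ·r·Λ = Λ·i(χ(r·Λ)) for all r ∈ R, hence Λ·R·Λ = Λ·i(B); (3) the map B → R, b ↦ Λ·i(b), is injective; (4) the map Tr : A → B, Tr(a) = χ(i(a)·Λ), is well defined (takes values in B), satisfies Tr(b·a) = b·Tr(a) for all b ∈ B, a ∈ A, and Tr(b) = b for all b ∈ B; consequently B is a direct summand of A as a left B-module. -/
import Mathlib


/-!
Properties of an element `Λ ∈ Q` with `χ Λ = 1`: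
`Λ` is idempotent, `Λ·R·Λ = Λ·i(B)`, `b ↦ Λ·i(b)` is injective on `B`,
and the trace map `Tr a = χ (i a * Λ)` is a left `B`-linear projection of `A` onto `B`.
-/

theorem idempotent_trace_properties
    {A R : Type*} [Ring A] [Ring R] (i : A →+* R) (χ : R → A)
    (hadd : ∀ r s : R, χ (r + s) = χ r + χ s)
    (h1 : ∀ (r : R) (a : A), χ (r * i a) = χ r * a)
    (h2 : ∀ r s : R, χ (i (χ r) * s) = χ (r * s))
    (h3 : χ 1 = 1)
    (B : Set A) (hB : B = {b : A | ∀ r : R, b * χ r = χ (i b * r)})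
    (Q : Set R) (hQ : Q = {q : R | ∀ r : R, q * r = q * i (χ r)})
    (Λ : R) (hΛQ : Λ ∈ Q) (hΛ1 : χ Λ = 1) :
    -- (1) Λ is idempotent
    (Λ * Λ = Λ) ∧
    -- (2) χ (r * Λ) ∈ B and Λ * r * Λ = Λ * i (χ (r * Λ)); hence Λ R Λ = Λ i(B)
    (∀ r : R, χ (r * Λ) ∈ B) ∧
    (∀ r : R, Λ * r * Λ = Λ * i (χ (r * Λ))) ∧
    ({z : R | ∃ r : R, z = Λ * r * Λ} = {z : R | ∃ b ∈ B, z = Λ * i b}) ∧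
    -- (3) b ↦ Λ * i b is injective on B
    (∀ b ∈ B, ∀ b' ∈ B, Λ * i b = Λ * i b' → b = b') ∧
    -- (4) Tr a = χ (i a * Λ) is a left B-linear projection A → B
    (∀ a : A, χ (i a * Λ) ∈ B) ∧
    (∀ b ∈ B, ∀ a : A, χ (i (b * a) * Λ) = b * χ (i a * Λ)) ∧
    (∀ b ∈ B, χ (i b * Λ) = b) := by
  subst hB hQ
  simp only [Set.mem_setOf_eq] at hΛQ
  -- key facts
  have hQ' : ∀ r : R, Λ * r = Λ * i (χ r) := hΛQ
  have hidem : Λ * Λ = Λ := by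
    rw [hQ' Λ, hΛ1, map_one, mul_one]
  have hrΛB : ∀ r : R, χ (r * Λ) ∈ {b : A | ∀ s : R, b * χ s = χ (i b * s)} := by
    intro r s
    rw [h2, ← h1, mul_assoc, ← hQ' s, ← mul_assoc]
  have hmid : ∀ r : R, Λ * r * Λ = Λ * i (χ (r * Λ)) := by
    intro r
    rw [mul_assoc, hQ' (r * Λ)]
  have hTrB : ∀ b ∈ {b : A | ∀ s : R, b * χ s = χ (i b * s)}, χ (i b * Λ) = b := by
    intro b hb
    rw [← hb Λ, hΛ1, mul_one]
  refine ⟨hidem, hrΛB, hmid, ?_, ?_, fun a => hrΛB (i a), ?_, hTrB⟩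
  · ext z
    simp only [Set.mem_setOf_eq]
    constructor
    · rintro ⟨r, rfl⟩
      exact ⟨χ (r * Λ), hrΛB r, hmid r⟩
    · rintro ⟨b, hb, rfl⟩
      exact ⟨i b, by rw [hmid, hTrB b hb]⟩
  · intro b hb b' hb' h
    have := congrArg χ h
    rw [h1, h1, hΛ1, one_mul, one_mul] at this
    exact this
  · intro b hb a
    rw [map_mul, mul_assoc, ← hb (i a * Λ)]
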